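/- arXiv:2403.07464 — 7 statements merged into one kernel-verified Lean document; each statement's English description precedes it below -/
import Mathlib

section
/- Let Z be a measurable space, μ a probability measure on Z, Ψ : Z → [0,∞) measurable with ∫ Ψ dμ = 1, and ν := μ.withDensity Ψ. Then AUC* − 1/2 = (1/4) ∫∫ |Ψ(z) − Ψ(w)| dμ(z) dμ(w), where AUC* := ∫∫ ( 1{Ψ(z) < Ψ(w)} + (1/2)·1{Ψ(z) = Ψ(w)} ) dμ(z) dν(w). In particular AUC* ≥ 1/2. -/
/-!
With `k a b = 1{a < b} + ½·1{a = b}`, the definition of `ν` gives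
`AUC* = ∫∫ Ψ w · k (Ψ z) (Ψ w) dμ(z) dμ(w)`. Exchanging the roles of `z` and `w` and averaging,
the pointwise identity `b · k a b + a · k b a = max a b = (a + b + |a - b|) / 2` yields
`2 AUC* = ∫∫ max (Ψ z) (Ψ w) = 1 + ½ ∫∫ |Ψ z - Ψ w|`, since `∫ Ψ dμ = 1`.
-/

open MeasureTheory

noncomputable def midRankLT (a b : ℝ) : ℝ :=
  (if a < b then 1 else 0) + 1 / 2 * (if a = b then 1 else 0)

lemma midRankLT_nonneg (a b : ℝ) : 0 ≤ midRankLT a b := by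
  unfold midRankLT; positivity

lemma midRankLT_le_one (a b : ℝ) : midRankLT a b ≤ 1 := by
  unfold midRankLT
  split_ifs with hlt heq <;> first | exact absurd heq hlt.ne | norm_num

lemma measurable_midRankLT : Measurable (Function.uncurry midRankLT) :=
  (measurable_const.ite (measurableSet_lt measurable_fst measurable_snd) measurable_const).add
    (measurable_const.mul
      (measurable_const.ite (measurableSet_eq_fun measurable_fst measurable_snd) measurable_const))

lemma mul_midRankLT_add_mul_midRankLT_swap (a b : ℝ) :
    a * midRankLT b a + b * midRankLT a b = max a b := by
  unfold midRankLT
  rcases lt_trichotomy a b with h | rfl | h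
  · simp [h, h.ne, h.ne', not_lt.mpr h.le, max_eq_right h.le]
  · simp; ring
  · simp [h, h.ne, h.ne', not_lt.mpr h.le, max_eq_left h.le]

section

variable {Z : Type*} [MeasurableSpace Z] {μ : Measure Z} [IsFiniteMeasure μ] {f : Z → ℝ}

lemma integrable_mul_midRankLT_prod (hf : Measurable f) (hfi : Integrable f μ) :
    Integrable (fun p : Z × Z => f p.1 * midRankLT (f p.2) (f p.1)) (μ.prod μ) := by
  refine (hfi.comp_fst μ).mul_bdd (c := 1) ?_ (ae_of_all _ fun p => ?_)
  · exact (measurable_midRankLT.comp ((hf.comp measurable_snd).prodMk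
      (hf.comp measurable_fst))).aestronglyMeasurable
  · rw [Real.norm_eq_abs, abs_of_nonneg (midRankLT_nonneg _ _)]
    exact midRankLT_le_one _ _

lemma integral_midRankLT_withDensity (hf : Measurable f) (hf0 : ∀ z, 0 ≤ f z)
    (hfi : Integrable f μ) :
    ∫ w, (∫ z, midRankLT (f z) (f w) ∂μ) ∂(μ.withDensity (fun z => ENNReal.ofReal (f z))) =
      ∫ p, f p.1 * midRankLT (f p.2) (f p.1) ∂(μ.prod μ) := by
  rw [integral_withDensity_eq_integral_toReal_smul hf.ennreal_ofReal
    (ae_of_all _ fun _ => ENNReal.ofReal_lt_top)]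
  refine (integral_congr_ae (ae_of_all _ fun w => ?_)).trans
    (integral_integral (f := fun w z => f w * midRankLT (f z) (f w))
      (integrable_mul_midRankLT_prod hf hfi))
  simp only [ENNReal.toReal_ofReal (hf0 w), smul_eq_mul, integral_const_mul]

lemma two_mul_integral_mul_midRankLT_prod (hf : Measurable f) (hfi : Integrable f μ) :
    2 * ∫ p, f p.1 * midRankLT (f p.2) (f p.1) ∂(μ.prod μ) =
      ∫ p, max (f p.1) (f p.2) ∂(μ.prod μ) := by
  have hK := integrable_mul_midRankLT_prod hf hfi
  have hKswap : Integrable (fun p : Z × Z => f p.2 * midRankLT (f p.1) (f p.2)) (μ.prod μ) :=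
    hK.swap
  have hsym : ∫ p, f p.2 * midRankLT (f p.1) (f p.2) ∂(μ.prod μ) =
      ∫ p, f p.1 * midRankLT (f p.2) (f p.1) ∂(μ.prod μ) :=
    integral_prod_swap (fun p : Z × Z => f p.1 * midRankLT (f p.2) (f p.1))
  calc 2 * ∫ p, f p.1 * midRankLT (f p.2) (f p.1) ∂(μ.prod μ)
      = ∫ p, f p.1 * midRankLT (f p.2) (f p.1) ∂(μ.prod μ)
          + ∫ p, f p.2 * midRankLT (f p.1) (f p.2) ∂(μ.prod μ) := by
        rw [hsym]; ring
    _ = ∫ p, max (f p.1) (f p.2) ∂(μ.prod μ) := by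
        rw [← integral_add hK hKswap]
        simp only [mul_midRankLT_add_mul_midRankLT_swap]

lemma integral_max_prod (hfi : Integrable f μ) :
    ∫ p, max (f p.1) (f p.2) ∂(μ.prod μ) =
      μ.real Set.univ * ∫ z, f z ∂μ + 1 / 2 * ∫ p, |f p.1 - f p.2| ∂(μ.prod μ) := by
  have hfst := hfi.comp_fst μ
  have hsnd := hfi.comp_snd μ
  have hsum : Integrable (fun p : Z × Z => f p.1 + f p.2) (μ.prod μ) := hfst.add hsnd
  have habs : Integrable (fun p : Z × Z => |f p.1 - f p.2|) (μ.prod μ) := (hfst.sub hsnd).abs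
  have hmax : ∀ a b : ℝ, max a b = (a + b + |a - b|) / 2 := fun a b => by
    rcases le_total a b with h | h
    · rw [max_eq_right h, abs_of_nonpos (sub_nonpos.2 h)]; ring
    · rw [max_eq_left h, abs_of_nonneg (sub_nonneg.2 h)]; ring
  simp only [hmax]
  rw [integral_div, integral_add hsum habs, integral_add hfst hsnd, integral_fun_fst,
    integral_fun_snd, smul_eq_mul]
  ring

end

/-- Equation (4) of Theorem 1: `AUC* - 1/2 = (1/4) ∫∫ |Ψ(z) - Ψ(w)| dμ(z) dμ(w)`,
in particular `AUC* ≥ 1/2`. -/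
theorem stmt_0 {Z : Type*} [MeasurableSpace Z] (μ : Measure Z) [IsProbabilityMeasure μ]
    (Ψ : Z → ℝ) (hΨmeas : Measurable Ψ) (hΨnonneg : ∀ z, 0 ≤ Ψ z)
    (hΨint : ∫ z, Ψ z ∂μ = 1)
    (ν : Measure Z) (hν : ν = μ.withDensity (fun z => ENNReal.ofReal (Ψ z)))
    (AUCstar : ℝ)
    (hAUC : AUCstar = ∫ w, (∫ z, ((if Ψ z < Ψ w then (1 : ℝ) else 0)
      + (1 / 2) * (if Ψ z = Ψ w then (1 : ℝ) else 0)) ∂μ) ∂ν) :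
    AUCstar - 1 / 2 = (1 / 4) * ∫ z, (∫ w, |Ψ z - Ψ w| ∂μ) ∂μ
      ∧ 1 / 2 ≤ AUCstar := by
  have hΨi : Integrable Ψ μ := by
    by_contra h
    rw [integral_undef h] at hΨint
    exact zero_ne_one hΨint
  have htwoAUC : 2 * AUCstar = 1 + 1 / 2 * ∫ p, |Ψ p.1 - Ψ p.2| ∂(μ.prod μ) := by
    change AUCstar = ∫ w, (∫ z, midRankLT (Ψ z) (Ψ w) ∂μ) ∂ν at hAUC
    rw [hAUC, hν, integral_midRankLT_withDensity hΨmeas hΨnonneg hΨi,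
      two_mul_integral_mul_midRankLT_prod hΨmeas hΨi, integral_max_prod hΨi, hΨint,
      probReal_univ, one_mul]
  have hiter : ∫ z, (∫ w, |Ψ z - Ψ w| ∂μ) ∂μ = ∫ p, |Ψ p.1 - Ψ p.2| ∂(μ.prod μ) :=
    (integral_prod _ ((hΨi.comp_fst μ).sub (hΨi.comp_snd μ)).abs).symm
  have hI : 0 ≤ ∫ p, |Ψ p.1 - Ψ p.2| ∂(μ.prod μ) := integral_nonneg fun _ => abs_nonneg _
  exact ⟨by rw [hiter]; linarith, by linarith⟩
end

section
/- Let Z be a measurable space, μ a probability measure on Z, Ψ : Z → [0,∞) measurable with ∫ Ψ dμ = 1, and ν := μ.withDensity Ψ. Define AUC* := ∫∫ ( 1{Ψ(z) < Ψ(w)} + (1/2)·1{Ψ(z) = Ψ(w)} ) dμ(z) dν(w). Then the following are equivalent: (a) ν = μ; (b) Ψ = 1 μ-almost everywhere; (c) AUC* = 1/2. -/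
open MeasureTheory Filter

/-- Theorem 1, equivalence (i) ⟺ (v): `ν = μ` iff `Ψ = 1` μ-a.e. iff `AUC* = 1/2`. -/
theorem stmt_1 {Z : Type*} [MeasurableSpace Z] (μ : Measure Z) [IsProbabilityMeasure μ]
    (Ψ : Z → ℝ) (hΨmeas : Measurable Ψ) (hΨnonneg : ∀ z, 0 ≤ Ψ z)
    (hΨint : ∫ z, Ψ z ∂μ = 1)
    (ν : Measure Z) (hν : ν = μ.withDensity (fun z => ENNReal.ofReal (Ψ z)))
    (AUCstar : ℝ)
    (hAUC : AUCstar = ∫ w, (∫ z, ((if Ψ z < Ψ w then (1 : ℝ) else 0)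
      + (1 / 2) * (if Ψ z = Ψ w then (1 : ℝ) else 0)) ∂μ) ∂ν) :
    (ν = μ ↔ (∀ᵐ z ∂μ, Ψ z = 1)) ∧
    ((∀ᵐ z ∂μ, Ψ z = 1) ↔ AUCstar = 1 / 2) ∧
    (AUCstar = 1 / 2 ↔ ν = μ) := by
  have hΨi : Integrable Ψ μ := by
    by_contra h
    rw [integral_undef h] at hΨint; norm_num at hΨint
  -- (a) ↔ (b)
  have hone : ν = μ ↔ (∀ᵐ z ∂μ, Ψ z = 1) := by
    rw [hν]
    constructor
    · intro h
      have h2 : μ.withDensity (fun z => ENNReal.ofReal (Ψ z)) = μ.withDensity 1 := by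
        rw [withDensity_one]; exact h
      have h3 := (withDensity_eq_iff_of_sigmaFinite
        (hΨmeas.ennreal_ofReal.aemeasurable) aemeasurable_const).1 h2
      filter_upwards [h3] with z hz
      simpa [ENNReal.ofReal_eq_one] using hz
    · intro h
      have h2 : (fun z => ENNReal.ofReal (Ψ z)) =ᵐ[μ] 1 := by
        filter_upwards [h] with z hz; simp [hz]
      rw [withDensity_congr_ae h2, withDensity_one]
  -- The kernel `G z w`
  set G : Z → Z → ℝ := fun z w => (if Ψ z < Ψ w then (1 : ℝ) else 0)
      + (1 / 2) * (if Ψ z = Ψ w then (1 : ℝ) else 0) with hGdef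
  have hG01 : ∀ z w, 0 ≤ G z w ∧ G z w ≤ 1 := by
    intro z w
    rcases lt_trichotomy (Ψ z) (Ψ w) with hlt | heq | hgt
    · simp [hGdef, hlt, ne_of_lt hlt]
    · simp [hGdef, heq, lt_irrefl]; norm_num
    · simp [hGdef, not_lt.2 hgt.le, (ne_of_lt hgt).symm]
  set F : Z × Z → ℝ := fun p => Ψ p.1 * G p.2 p.1 with hFdef
  have hFmeas : Measurable F := by
    apply (hΨmeas.comp measurable_fst).mul
    apply Measurable.add
    · exact Measurable.ite
        (measurableSet_lt (hΨmeas.comp measurable_snd) (hΨmeas.comp measurable_fst))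
        measurable_const measurable_const
    · exact (Measurable.ite
        (measurableSet_eq_fun (hΨmeas.comp measurable_snd) (hΨmeas.comp measurable_fst))
        measurable_const measurable_const).const_mul _
  have hbase : Integrable (fun p : Z × Z => Ψ p.1) (μ.prod μ) := by
    simpa using hΨi.mul_prod (integrable_const (1 : ℝ))
  have hsnd : Integrable (fun p : Z × Z => Ψ p.2) (μ.prod μ) := by
    simpa using (integrable_const (1 : ℝ)).mul_prod hΨi
  have hFint : Integrable F (μ.prod μ) := by
    apply hbase.mono' hFmeas.aestronglyMeasurable
    filter_upwards with p
    have h1 := hG01 p.2 p.1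
    have h2 := hΨnonneg p.1
    rw [Real.norm_eq_abs, abs_of_nonneg (mul_nonneg h2 h1.1)]
    calc Ψ p.1 * G p.2 p.1 ≤ Ψ p.1 * 1 := by
          exact mul_le_mul_of_nonneg_left h1.2 h2
      _ = Ψ p.1 := mul_one _
  -- AUCstar as a product integral
  have hA1 : AUCstar = ∫ w, Ψ w * (∫ z, G z w ∂μ) ∂μ := by
    rw [hAUC, hν]
    rw [show (fun z => ENNReal.ofReal (Ψ z)) = fun z => ((Ψ z).toNNReal : ENNReal) from rfl]
    rw [integral_withDensity_eq_integral_smul hΨmeas.real_toNNReal]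
    congr 1; funext w
    rw [NNReal.smul_def, Real.coe_toNNReal _ (hΨnonneg w), smul_eq_mul]
  have hA2 : AUCstar = ∫ p : Z × Z, F p ∂(μ.prod μ) := by
    have h := integral_integral (μ := μ) (ν := μ) (f := fun w z => Ψ w * G z w) hFint
    rw [hA1]
    calc ∫ w, Ψ w * ∫ z, G z w ∂μ ∂μ
        = ∫ w, ∫ z, Ψ w * G z w ∂μ ∂μ := by
          congr 1; funext w; exact (integral_const_mul _ _).symm
      _ = ∫ p : Z × Z, F p ∂(μ.prod μ) := h
  have hFswapint : Integrable (fun p : Z × Z => F p.swap) (μ.prod μ) := hFint.swap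
  have hswap : ∫ p : Z × Z, F p.swap ∂(μ.prod μ) = ∫ p : Z × Z, F p ∂(μ.prod μ) :=
    integral_prod_swap F
  -- The nonnegative "defect" integral
  set I : ℝ := ∫ p : Z × Z, max (Ψ p.1 - Ψ p.2) 0 ∂(μ.prod μ) with hI
  have hmaxmeas : Measurable (fun p : Z × Z => max (Ψ p.1 - Ψ p.2) 0) :=
    ((hΨmeas.comp measurable_fst).sub (hΨmeas.comp measurable_snd)).max measurable_const
  have hmaxint : Integrable (fun p : Z × Z => max (Ψ p.1 - Ψ p.2) 0) (μ.prod μ) := by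
    apply (hbase.add hsnd).mono' hmaxmeas.aestronglyMeasurable
    filter_upwards with p
    have h1 := hΨnonneg p.1
    have h2 := hΨnonneg p.2
    rw [Real.norm_eq_abs, abs_of_nonneg (le_max_right _ _), Pi.add_apply]
    apply max_le <;> linarith
  have hpt : ∀ p : Z × Z, F p + F p.swap = Ψ p.2 + max (Ψ p.1 - Ψ p.2) 0 := by
    intro p
    rcases lt_trichotomy (Ψ p.2) (Ψ p.1) with hlt | heq | hgt
    · simp only [hFdef, hGdef, Prod.fst_swap, Prod.snd_swap]
      rw [if_pos hlt, if_neg (ne_of_lt hlt), if_neg (not_lt.2 hlt.le),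
        if_neg (ne_of_lt hlt).symm, max_eq_left (by linarith)]
      ring
    · simp only [hFdef, hGdef, Prod.fst_swap, Prod.snd_swap]
      rw [if_neg (by rw [heq]; exact lt_irrefl _), if_pos heq,
        if_neg (by rw [heq]; exact lt_irrefl _), if_pos heq.symm,
        max_eq_right (by linarith)]
      rw [heq]; ring
    · simp only [hFdef, hGdef, Prod.fst_swap, Prod.snd_swap]
      rw [if_neg (not_lt.2 hgt.le), if_neg (ne_of_lt hgt).symm, if_pos hgt,
        if_neg (ne_of_lt hgt), max_eq_right (by linarith)]
      ring
  have hsnd1 : ∫ p : Z × Z, Ψ p.2 ∂(μ.prod μ) = 1 := by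
    rw [integral_prod _ hsnd]
    simp [hΨint]
  have hkey : 2 * AUCstar = 1 + I := by
    have h2 : 2 * AUCstar = ∫ p : Z × Z, (F p + F p.swap) ∂(μ.prod μ) := by
      rw [integral_add hFint hFswapint, hswap, ← hA2]; ring
    rw [h2]
    calc ∫ p : Z × Z, (F p + F p.swap) ∂(μ.prod μ)
        = ∫ p : Z × Z, (Ψ p.2 + max (Ψ p.1 - Ψ p.2) 0) ∂(μ.prod μ) := by
          exact integral_congr_ae (Eventually.of_forall hpt)
      _ = 1 + I := by rw [integral_add hsnd hmaxint, hsnd1]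
  have hIzero : I = 0 ↔ ∀ᵐ p ∂(μ.prod μ), Ψ p.1 ≤ Ψ p.2 := by
    have hz := integral_eq_zero_iff_of_nonneg
      (f := fun p : Z × Z => max (Ψ p.1 - Ψ p.2) 0) (fun p => le_max_right _ _) hmaxint
    rw [hI, hz]
    constructor <;> intro h <;> filter_upwards [h] with p hp
    · have : max (Ψ p.1 - Ψ p.2) 0 = 0 := hp
      rw [max_eq_right_iff] at this
      linarith
    · show max (Ψ p.1 - Ψ p.2) 0 = 0
      rw [max_eq_right_iff]; linarith
  have haec : (∀ᵐ p ∂(μ.prod μ), Ψ p.1 ≤ Ψ p.2) → ∀ᵐ z ∂μ, Ψ z = 1 := by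
    intro h
    have hswap' : ∀ᵐ p ∂(μ.prod μ), Ψ p.2 ≤ Ψ p.1 := by
      have h2 : ∀ᵐ p ∂((μ.prod μ).map Prod.swap), Ψ p.1 ≤ Ψ p.2 := by
        rw [Measure.prod_swap]; exact h
      have h3 := (ae_map_iff measurable_swap.aemeasurable
        (measurableSet_le (hΨmeas.comp measurable_fst) (hΨmeas.comp measurable_snd))).1 h2
      simpa using h3
    have heq : ∀ᵐ p ∂(μ.prod μ), Ψ p.1 = Ψ p.2 := by
      filter_upwards [h, hswap'] with p h1 h2; exact le_antisymm h1 h2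
    have h4 := Measure.ae_ae_of_ae_prod heq
    have hne : (ae μ).NeBot := ae_neBot.2 (IsProbabilityMeasure.ne_zero μ)
    obtain ⟨x, hx⟩ := h4.exists
    have hx1 : Ψ x = 1 := by
      have hc : ∫ z, Ψ z ∂μ = ∫ _ : Z, Ψ x ∂μ :=
        integral_congr_ae (by filter_upwards [hx] with y hy; exact hy.symm)
      rw [hΨint] at hc
      simpa using hc.symm
    filter_upwards [hx] with y hy; rw [← hy, hx1]
  have hconv : (∀ᵐ z ∂μ, Ψ z = 1) → I = 0 := by
    intro h
    rw [hIzero]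
    have h1 : ∀ᵐ p ∂(μ.prod μ), Ψ p.1 = 1 :=
      Measure.quasiMeasurePreserving_fst.tendsto_ae.eventually h
    have h2 : ∀ᵐ p ∂(μ.prod μ), Ψ p.2 = 1 :=
      Measure.quasiMeasurePreserving_snd.tendsto_ae.eventually h
    filter_upwards [h1, h2] with p hp1 hp2; rw [hp1, hp2]
  have hbc : (∀ᵐ z ∂μ, Ψ z = 1) ↔ AUCstar = 1 / 2 := by
    constructor
    · intro h
      have hI0 : I = 0 := hconv h
      linarith
    · intro h
      apply haec
      rw [← hIzero]
      have : (1 : ℝ) + I = 1 := by rw [← hkey, h]; norm_num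
      linarith
  exact ⟨hone, hbc, hbc.symm.trans hone.symm⟩
end

section
/- Let Z be a measurable space, μ a probability measure on Z, Ψ : Z → [0,∞) measurable with ∫ Ψ dμ = 1, and ν := μ.withDensity Ψ. Then for every t ∈ ℝ, ν({z : Ψ(z) > t}) ≥ μ({z : Ψ(z) > t}); that is, the pushforward of ν by Ψ stochastically dominates the pushforward of μ by Ψ. -/
open MeasureTheory

/-- The pushforward of `ν = Ψ·μ` by `Ψ` stochastically dominates that of `μ`:
for every `t`, `ν{Ψ > t} ≥ μ{Ψ > t}`. -/
theorem stmt_2 {Z : Type*} [MeasurableSpace Z] (μ : Measure Z) [IsProbabilityMeasure μ]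
    (Ψ : Z → ℝ) (hΨmeas : Measurable Ψ) (hΨnonneg : ∀ z, 0 ≤ Ψ z)
    (hΨint : ∫ z, Ψ z ∂μ = 1)
    (ν : Measure Z) (hν : ν = μ.withDensity (fun z => ENNReal.ofReal (Ψ z))) :
    ∀ t : ℝ, μ {z | t < Ψ z} ≤ ν {z | t < Ψ z} := by
  intro t
  have hint : Integrable Ψ μ := by
    by_contra h
    rw [integral_undef h] at hΨint
    norm_num at hΨint
  have hmeasΨ' : Measurable (fun z => ENNReal.ofReal (Ψ z)) :=
    ENNReal.measurable_ofReal.comp hΨmeas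
  have hA : MeasurableSet {z | t < Ψ z} := measurableSet_lt measurable_const hΨmeas
  have hνA : ∀ (s : Set Z), MeasurableSet s → ν s = ∫⁻ z in s, ENNReal.ofReal (Ψ z) ∂μ := by
    intro s hs
    rw [hν, withDensity_apply _ hs]
  have hν1 : ν Set.univ = 1 := by
    rw [hνA _ MeasurableSet.univ, setLIntegral_univ,
      ← ofReal_integral_eq_lintegral_ofReal hint (Filter.Eventually.of_forall hΨnonneg),
      hΨint, ENNReal.ofReal_one]
  rcases le_or_gt 1 t with ht | ht
  · -- on the set, Ψ > t ≥ 1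
    rw [hνA _ hA]
    calc μ {z | t < Ψ z} = ∫⁻ _ in {z | t < Ψ z}, 1 ∂μ := by
          rw [setLIntegral_const, one_mul]
      _ ≤ ∫⁻ z in {z | t < Ψ z}, ENNReal.ofReal (Ψ z) ∂μ := by
          apply setLIntegral_mono hmeasΨ'
          intro z hz
          have : (1 : ℝ) ≤ Ψ z := le_of_lt (lt_of_le_of_lt ht hz)
          simpa using ENNReal.one_le_ofReal.mpr this
  · -- complement argument
    have hAc : MeasurableSet {z | t < Ψ z}ᶜ := hA.compl
    have hle : ν {z | t < Ψ z}ᶜ ≤ μ {z | t < Ψ z}ᶜ := by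
      rw [hνA _ hAc]
      calc ∫⁻ z in {z | t < Ψ z}ᶜ, ENNReal.ofReal (Ψ z) ∂μ
          ≤ ∫⁻ _ in {z | t < Ψ z}ᶜ, ENNReal.ofReal t ∂μ := by
            apply setLIntegral_mono measurable_const
            intro z hz
            exact ENNReal.ofReal_le_ofReal (not_lt.mp hz)
        _ = ENNReal.ofReal t * μ {z | t < Ψ z}ᶜ := by rw [setLIntegral_const]
        _ ≤ 1 * μ {z | t < Ψ z}ᶜ := by
            apply mul_le_mul_left
            exact ENNReal.ofReal_le_one.mpr (le_of_lt ht)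
        _ = μ {z | t < Ψ z}ᶜ := one_mul _
    have hνfin : ν {z | t < Ψ z}ᶜ ≠ ⊤ := by
      refine ne_top_of_le_ne_top ?_ (measure_mono (Set.subset_univ _))
      rw [hν1]; exact ENNReal.one_ne_top
    have h1 : μ {z | t < Ψ z} = 1 - μ {z | t < Ψ z}ᶜ := by
      rw [← measure_univ (μ := μ), ← measure_compl hAc (measure_ne_top μ _), compl_compl]
    have h2 : ν {z | t < Ψ z} = 1 - ν {z | t < Ψ z}ᶜ := by
      rw [← hν1, ← measure_compl hAc hνfin, compl_compl]
    rw [h1, h2]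
    exact tsub_le_tsub_left hle 1
end

section
/- Let Z be a measurable space, μ a probability measure on Z, Ψ : Z → [0,∞) measurable with ∫ Ψ dμ = 1, and ν := μ.withDensity Ψ. Then the pushforward measures satisfy ν.map Ψ = μ.map Ψ if and only if Ψ = 1 μ-almost everywhere, if and only if ν = μ. -/
/-!
Pushing forward along `Ψ` turns `ν = μ.withDensity (ofReal ∘ Ψ)` into
`(μ.map Ψ).withDensity ofReal`, since the density factors through `Ψ`. So `ν.map Ψ = μ.map Ψ`
says that the identity density `ofReal` is `1` a.e. for the finite measure `μ.map Ψ`, i.e.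
`Ψ = 1` `μ`-a.e.; and then `ν = μ.withDensity 1 = μ`.
-/

open MeasureTheory

namespace MeasureTheory.Measure

variable {α β : Type*} [MeasurableSpace α] [MeasurableSpace β] {μ : Measure α}
  {g : α → β} {f : β → ENNReal}

theorem map_withDensity_comp (hg : Measurable g) (hf : Measurable f) :
    (μ.withDensity (f ∘ g)).map g = (μ.map g).withDensity f := by
  ext s hs
  rw [map_apply hg hs, withDensity_apply _ (hg hs), withDensity_apply _ hs,
    setLIntegral_map hs hf hg, Function.comp_def]

theorem comp_ae_eq_one_of_map_withDensity_comp_eq_map [IsFiniteMeasure μ] (hg : Measurable g)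
    (hf : Measurable f) (h : (μ.withDensity (f ∘ g)).map g = μ.map g) : f ∘ g =ᵐ[μ] 1 := by
  have hmap : (μ.map g).withDensity f = (μ.map g).withDensity 1 := by
    rw [← map_withDensity_comp hg hf, withDensity_one, h]
  have hf_ae : f =ᵐ[μ.map g] 1 :=
    (withDensity_eq_iff_of_sigmaFinite hf.aemeasurable aemeasurable_const).1 hmap
  exact ae_of_ae_map hg.aemeasurable hf_ae

end MeasureTheory.Measure

theorem stmt_3_general {Z : Type*} [MeasurableSpace Z] (μ : Measure Z) [IsProbabilityMeasure μ]
    (Ψ : Z → ℝ) (hΨmeas : Measurable Ψ)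
    (ν : Measure Z) (hν : ν = μ.withDensity (fun z => ENNReal.ofReal (Ψ z))) :
    (ν.map Ψ = μ.map Ψ ↔ (∀ᵐ z ∂μ, Ψ z = 1)) ∧
    ((∀ᵐ z ∂μ, Ψ z = 1) ↔ ν = μ) := by
  have ae_eq_one (h : ν.map Ψ = μ.map Ψ) : ∀ᵐ z ∂μ, Ψ z = 1 := by
    subst hν
    filter_upwards [Measure.comp_ae_eq_one_of_map_withDensity_comp_eq_map hΨmeas
      ENNReal.measurable_ofReal h] with z hz
    exact ENNReal.ofReal_eq_one.1 hz
  have eq_of_ae_eq_one (h : ∀ᵐ z ∂μ, Ψ z = 1) : ν = μ := by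
    have hdens : (fun z => ENNReal.ofReal (Ψ z)) =ᵐ[μ] 1 := by
      filter_upwards [h] with z hz
      simp [hz]
    rw [hν, withDensity_congr_ae hdens, withDensity_one]
  exact ⟨⟨ae_eq_one, fun h => by rw [eq_of_ae_eq_one h]⟩,
    ⟨eq_of_ae_eq_one, fun h => ae_eq_one (by rw [h])⟩⟩

/-- Theorem 1, equivalence (i) ⟺ (ii): the two pushforward distributions of the optimal
scoring function `Ψ` coincide iff `Ψ = 1` μ-a.e. iff `ν = μ`. -/
theorem stmt_3 {Z : Type*} [MeasurableSpace Z] (μ : Measure Z) [IsProbabilityMeasure μ]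
    (Ψ : Z → ℝ) (hΨmeas : Measurable Ψ) (hΨnonneg : ∀ z, 0 ≤ Ψ z)
    (hΨint : ∫ z, Ψ z ∂μ = 1)
    (ν : Measure Z) (hν : ν = μ.withDensity (fun z => ENNReal.ofReal (Ψ z))) :
    (ν.map Ψ = μ.map Ψ ↔ (∀ᵐ z ∂μ, Ψ z = 1)) ∧
    ((∀ᵐ z ∂μ, Ψ z = 1) ↔ ν = μ) :=
  stmt_3_general μ Ψ hΨmeas ν hν
end

section
/- Let 𝒳, 𝒴 be measurable spaces, let (X₁,Y₁),…,(X_{n′},Y_{n′}) be i.i.d. random pairs valued in 𝒳 × 𝒴 such that X₁ and Y₁ are independent (the null hypothesis H₀), let n′ = n′₋ + n′₊ with n′₋, n′₊ ≥ 1, and let σ′ be a uniformly distributed random permutation of {1,…,n′₋} independent of the sample. Let s : 𝒳 × 𝒴 → ℝ be measurable such that the law of s(X₁,Y₂) is atomless, and let φ : [0,1] → ℝ be measurable. Form the n′ scores: negatives s(X_i, Y_{σ′(i)}) for 1 ≤ i ≤ n′₋ and positives s(X_i, Y_i) for n′₋ < i ≤ n′; let R′_i denote the rank of the i-th score among all n′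 scores, and set Ŵ := (1/n′₊) Σ_{i=n′₋+1}^{n′} φ(R′_i/(n′+1)). Let L denote the law of the analogous statistic computed from n′ i.i.d. Uniform(0,1) scores, and for α ∈ (0,1) define q(α) := inf{ t ∈ ℝ : L((−∞, ∫₀¹φ(u)du + t]) ≥ 1 − α }. Then P( Ŵ > ∫₀¹ φ(u) du + q(α) ) ≤ α. -/
/-!
Under the null hypothesis every pair `(X i, Y j)` has law `νX ⊗ νY`, so for each fixed
permutation `g` the re-paired sample `(X i, Y (g i))ᵢ` has the same law as the sample itself;
since `σ'` is independent of the sample, the scores are i.i.d. with the atomless law `μ` of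
`s (X 0, Y 1)`. For i.i.d. atomless coordinates, each strict ordering of the coordinates has
probability `1 / n!`, and a rank statistic is constant on each ordering, so its law is the same
for every atomless `μ`, in particular for the uniform law on `(0, 1)`: it is `L`. The bound is
then the defining property of the `(1 - α)`-quantile, by right-continuity of the distribution
function of `L`.
-/

open MeasureTheory ProbabilityTheory Finset

noncomputable instance {m : ℕ} : MeasurableSpace (Equiv.Perm (Fin m)) := ⊤

lemma Equiv.Perm.extendDomain_castLEEmb_apply {a b : ℕ} (h : a ≤ b) (π : Equiv.Perm (Fin a))
    (i : Fin b) :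
    π.extendDomain (Fin.castLEEmb h).toEquivRange i
      = if h' : (i : ℕ) < a then Fin.castLE h (π ⟨i, h'⟩) else i := by
  split_ifs with h'
  · have hi : i ∈ Set.range (Fin.castLEEmb h) := ⟨⟨i, h'⟩, rfl⟩
    have hi' : (⟨i, hi⟩ : Set.range (Fin.castLEEmb h)) = (Fin.castLEEmb h).toEquivRange ⟨i, h'⟩ :=
      rfl
    rw [Equiv.Perm.extendDomain_apply_subtype _ _ hi, hi', Equiv.symm_apply_apply]
    rfl
  · refine Equiv.Perm.extendDomain_apply_not_subtype _ _ ?_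
    rintro ⟨j, rfl⟩
    exact h' j.isLt

theorem ProbabilityTheory.IndepFun.map_eq_of_forall_map_map_eq {Ω ι β γ : Type*}
    [MeasurableSpace Ω] [MeasurableSpace ι] [MeasurableSpace β] [MeasurableSpace γ]
    [Countable ι] [MeasurableSingletonClass ι]
    {P : Measure Ω} [IsProbabilityMeasure P] {σ : Ω → ι} {W : Ω → β}
    (hσ : Measurable σ) (hW : Measurable W) (hind : IndepFun σ W P)
    {F : ι → β → γ} (hF : ∀ i, Measurable (F i)) {ν : Measure γ}
    (hν : ∀ i, (P.map W).map (F i) = ν) :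
    P.map (fun ω => F (σ ω) (W ω)) = ν := by
  have hFσW : Measurable fun ω => F (σ ω) (W ω) :=
    (measurable_from_prod_countable_left (f := fun p : β × ι => F p.2 p.1) hF).comp
      (hW.prodMk hσ)
  have hfiber : ∀ i, MeasurableSet (σ ⁻¹' {i}) := fun i => hσ (measurableSet_singleton i)
  have hfibers : Pairwise (Function.onFun Disjoint fun i => σ ⁻¹' {i}) :=
    fun i j hij => Set.disjoint_left.2 fun ω hi hj => hij (hi.symm.trans hj)
  have htotal : ∑' i, P (σ ⁻¹' {i}) = 1 := by
    rw [← measure_iUnion hfibers hfiber, ← Set.preimage_iUnion, Set.iUnion_singleton_eq_range,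
      Set.range_id', Set.preimage_univ, measure_univ]
  ext B hB
  have hpieces : (fun ω => F (σ ω) (W ω)) ⁻¹' B = ⋃ i, σ ⁻¹' {i} ∩ W ⁻¹' (F i ⁻¹' B) := by
    ext ω
    simp
  rw [Measure.map_apply hFσW hB, hpieces,
    measure_iUnion (fun i j hij => (hfibers hij).mono Set.inter_subset_left Set.inter_subset_left)
      fun i => (hfiber i).inter (hW (hF i hB))]
  simp_rw [hind.measure_inter_preimage_eq_mul _ _ (measurableSet_singleton _) (hF _ hB),
    ← Measure.map_apply hW (hF _ hB), ← Measure.map_apply (hF _) hB, hν]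
  rw [ENNReal.tsum_mul_right, htotal, one_mul]

theorem measurePreserving_shuffleSnd {𝒳 𝒴 : Type*} [MeasurableSpace 𝒳] [MeasurableSpace 𝒴]
    {n : ℕ} (νX : Measure 𝒳) (νY : Measure 𝒴) [IsProbabilityMeasure νX] [IsProbabilityMeasure νY]
    (g : Equiv.Perm (Fin n)) :
    MeasurePreserving (fun (w : Fin n → 𝒳 × 𝒴) i => ((w i).1, (w (g i)).2))
      (Measure.pi fun _ => νX.prod νY) (Measure.pi fun _ => νX.prod νY) := by
  have hE := measurePreserving_arrowProdEquivProdArrow 𝒳 𝒴 (Fin n) (fun _ => νX) (fun _ => νY)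
  have hg : MeasurePreserving (fun v : Fin n → 𝒴 => v ∘ g)
      (Measure.pi fun _ => νY) (Measure.pi fun _ => νY) :=
    measurePreserving_arrowCongr' (fun _ => νY) (fun _ => νY) g.symm (MeasurableEquiv.refl 𝒴)
      fun _ => ⟨measurable_id, Measure.map_id⟩
  exact (hE.symm _).comp (((MeasurePreserving.id _).prod hg).comp hE)

section NullHypothesis

variable {Ω ι 𝒳 𝒴 : Type*} [MeasurableSpace Ω] [MeasurableSpace 𝒳] [MeasurableSpace 𝒴]
  {P : Measure Ω} [IsProbabilityMeasure P]

theorem map_prod_eq_prod_of_iIndepFun {X : ι → Ω → 𝒳} {Y : ι → Ω → 𝒴}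
    (hX : ∀ i, Measurable (X i)) (hY : ∀ i, Measurable (Y i))
    (hind : iIndepFun (fun i ω => (X i ω, Y i ω)) P)
    (hident : ∀ i j, P.map (fun ω => (X i ω, Y i ω)) = P.map (fun ω => (X j ω, Y j ω)))
    {i₀ : ι} (hnull : IndepFun (X i₀) (Y i₀) P) (i j : ι) :
    P.map (fun ω => (X i ω, Y j ω)) = (P.map (X i₀)).prod (P.map (Y i₀)) := by
  have hpair : ∀ k, Measurable fun ω => (X k ω, Y k ω) := fun k => (hX k).prodMk (hY k)
  have hfst : ∀ k, P.map (X k) = (P.map fun ω => (X k ω, Y k ω)).map Prod.fst := fun k => by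
    rw [Measure.map_map measurable_fst (hpair k)]
    rfl
  have hsnd : ∀ k, P.map (Y k) = (P.map fun ω => (X k ω, Y k ω)).map Prod.snd := fun k => by
    rw [Measure.map_map measurable_snd (hpair k)]
    rfl
  rcases eq_or_ne i j with rfl | hij
  · rw [hident i i₀]
    exact (indepFun_iff_map_prod_eq_prod_map_map (hX i₀).aemeasurable
      (hY i₀).aemeasurable).1 hnull
  · rw [(indepFun_iff_map_prod_eq_prod_map_map (hX i).aemeasurable (hY j).aemeasurable).1
      ((hind.indepFun hij).comp measurable_fst measurable_snd), hfst i, hsnd j, hident i i₀,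
      hident j i₀, ← hfst, ← hsnd]

theorem map_shuffledScore_eq {n : ℕ} {X : Fin n → Ω → 𝒳} {Y : Fin n → Ω → 𝒴}
    (hX : ∀ i, Measurable (X i)) (hY : ∀ i, Measurable (Y i))
    (hind : iIndepFun (fun i ω => (X i ω, Y i ω)) P)
    (hident : ∀ i j, P.map (fun ω => (X i ω, Y i ω)) = P.map (fun ω => (X j ω, Y j ω)))
    {i₀ : Fin n} (hnull : IndepFun (X i₀) (Y i₀) P)
    [MeasurableSpace ι] [Countable ι] [MeasurableSingletonClass ι] {σ : Ω → ι}
    (hσ : Measurable σ) (hσind : IndepFun σ (fun ω i => (X i ω, Y i ω)) P)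
    (g : ι → Equiv.Perm (Fin n)) {s : 𝒳 × 𝒴 → ℝ} (hs : Measurable s) :
    P.map (fun ω i => s (X i ω, Y (g (σ ω) i) ω))
      = Measure.pi fun _ => ((P.map (X i₀)).prod (P.map (Y i₀))).map s := by
  have : IsProbabilityMeasure (P.map (X i₀)) :=
    Measure.isProbabilityMeasure_map (hX i₀).aemeasurable
  have : IsProbabilityMeasure (P.map (Y i₀)) :=
    Measure.isProbabilityMeasure_map (hY i₀).aemeasurable
  have hsample : P.map (fun ω i => (X i ω, Y i ω))
      = Measure.pi fun _ => (P.map (X i₀)).prod (P.map (Y i₀)) := by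
    rw [hind.map_fun_eq_pi_map fun i => ((hX i).prodMk (hY i)).aemeasurable]
    simp_rw [map_prod_eq_prod_of_iIndepFun hX hY hind hident hnull]
  refine hσind.map_eq_of_forall_map_map_eq hσ (measurable_pi_iff.2 fun i => (hX i).prodMk (hY i))
    (F := fun k w i => s ((w i).1, (w (g k i)).2)) (fun k => ?_) fun k => ?_
  · exact measurable_pi_iff.2 fun i => hs.comp
      ((measurable_pi_apply i).fst.prodMk (measurable_pi_apply _).snd)
  · rw [hsample]
    exact ((measurePreserving_pi _ _ fun _ => ⟨hs, rfl⟩).comp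
      (measurePreserving_shuffleSnd _ _ (g k))).map_eq

end NullHypothesis

section OrderCell

variable {n : ℕ}

def orderCell (π : Equiv.Perm (Fin n)) : Set (Fin n → ℝ) := {z | StrictMono (z ∘ π)}

def rankVector (π : Equiv.Perm (Fin n)) : Fin n → ℝ := fun i => ((π.symm i : ℕ) : ℝ)

lemma measurableSet_orderCell (π : Equiv.Perm (Fin n)) : MeasurableSet (orderCell π) := by
  have : orderCell π = ⋂ (i : Fin n) (j : Fin n) (_ : i < j), {z | z (π i) < z (π j)} := by
    ext z
    simp only [orderCell, StrictMono, Set.mem_ofPred_eq, Set.mem_iInter, Function.comp_apply]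
  rw [this]
  exact .iInter fun i => .iInter fun j => .iInter fun _ =>
    measurableSet_lt (measurable_pi_apply _) (measurable_pi_apply _)

lemma eq_sort_of_mem_orderCell {z : Fin n → ℝ} {π : Equiv.Perm (Fin n)} (h : z ∈ orderCell π) :
    π = Tuple.sort z :=
  Tuple.eq_sort_iff.2 ⟨h.monotone, fun _ _ hij hz => absurd hz (h hij).ne⟩

lemma pairwise_disjoint_orderCell : Pairwise (Function.onFun Disjoint (orderCell (n := n))) :=
  fun _ _ hne => Set.disjoint_left.2 fun _ hπ hτ =>
    hne ((eq_sort_of_mem_orderCell hπ).trans (eq_sort_of_mem_orderCell hτ).symm)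

lemma mem_orderCell_sort {z : Fin n → ℝ} (hz : Function.Injective z) :
    z ∈ orderCell (Tuple.sort z) :=
  (Tuple.monotone_sort z).strictMono_of_injective (hz.comp (Equiv.injective _))

lemma le_iff_of_mem_orderCell {z : Fin n → ℝ} {π : Equiv.Perm (Fin n)} (hz : z ∈ orderCell π)
    (i j : Fin n) : z j ≤ z i ↔ π.symm j ≤ π.symm i := by
  simpa using hz.le_iff_le (a := π.symm j) (b := π.symm i)

lemma rankVector_mem_orderCell (π : Equiv.Perm (Fin n)) : rankVector π ∈ orderCell π :=
  fun a b hab => by simpa [rankVector] using hab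

lemma measure_pi_not_injective (m : Measure ℝ) [IsProbabilityMeasure m] [NullSingletonClass m] :
    Measure.pi (fun _ : Fin n => m) {z | ¬ Function.Injective z} = 0 := by
  have hsub : {z : Fin n → ℝ | ¬ Function.Injective z} ⊆
      ⋃ (i) (j) (_ : i ≠ j), {z | z i = z j} := by
    intro z hz
    simp only [Function.Injective, not_forall] at hz
    obtain ⟨i, j, hzij, hij⟩ := hz
    simp only [Set.mem_iUnion]
    exact ⟨i, j, hij, hzij⟩
  refine measure_mono_null hsub (measure_iUnion_null fun i => measure_iUnion_null fun j =>
    measure_iUnion_null fun hij => ?_)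
  have hind : IndepFun (fun z : Fin n → ℝ => z i) (fun z => z j) (Measure.pi fun _ => m) :=
    (iIndepFun_pi (X := fun _ x => x) fun _ => aemeasurable_id).indepFun hij
  have hlaw := (indepFun_iff_map_prod_eq_prod_map_map (measurable_pi_apply i).aemeasurable
    (measurable_pi_apply j).aemeasurable).mp hind
  rw [(measurePreserving_eval _ i).map_eq, (measurePreserving_eval _ j).map_eq] at hlaw
  have hdiag : MeasurableSet {p : ℝ × ℝ | p.1 = p.2} :=
    measurableSet_eq_fun measurable_fst measurable_snd
  calc Measure.pi (fun _ => m) {z | z i = z j}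
      = (Measure.pi fun _ => m).map (fun z : Fin n → ℝ => (z i, z j)) {p | p.1 = p.2} := by
        rw [Measure.map_apply ((measurable_pi_apply i).prodMk (measurable_pi_apply j)) hdiag]
        rfl
    _ = 0 := by
        rw [hlaw, Measure.prod_apply hdiag]
        simp [Set.preimage]

variable (m : Measure ℝ) [IsProbabilityMeasure m] [NullSingletonClass m]

lemma measure_compl_iUnion_orderCell :
    Measure.pi (fun _ : Fin n => m) (⋃ π, orderCell π)ᶜ = 0 :=
  measure_mono_null (fun _ hz hinj => hz (Set.mem_iUnion.2 ⟨_, mem_orderCell_sort hinj⟩))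
    (measure_pi_not_injective m)

lemma measure_orderCell (π : Equiv.Perm (Fin n)) :
    Measure.pi (fun _ : Fin n => m) (orderCell π) = (n.factorial : ENNReal)⁻¹ := by
  set ν := Measure.pi fun _ : Fin n => m
  have hexch : ∀ τ : Equiv.Perm (Fin n), ν (orderCell τ) = ν (orderCell 1) := fun τ =>
    (measurePreserving_arrowCongr' (fun _ => m) (fun _ => m) τ.symm (MeasurableEquiv.refl ℝ)
      fun _ => ⟨measurable_id, Measure.map_id⟩).measure_preimage
      (measurableSet_orderCell 1).nullMeasurableSet
  have hsum : ∑ τ : Equiv.Perm (Fin n), ν (orderCell τ) = 1 := by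
    rw [← tsum_fintype (L := .unconditional _),
      ← measure_iUnion pairwise_disjoint_orderCell measurableSet_orderCell]
    exact (prob_compl_eq_zero_iff (.iUnion measurableSet_orderCell)).1
      (measure_compl_iUnion_orderCell m)
  simp only [hexch, sum_const, card_univ, Fintype.card_perm, Fintype.card_fin, nsmul_eq_mul]
    at hsum
  rw [hexch]
  exact ENNReal.eq_inv_of_mul_eq_one_left ((mul_comm _ _).trans hsum)

theorem map_pi_eq_sum_dirac_rankVector {T : (Fin n → ℝ) → ℝ} (hT : Measurable T)
    (hTord : ∀ z z' : Fin n → ℝ, (∀ i j, z j ≤ z i ↔ z' j ≤ z' i) → T z = T z') :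
    (Measure.pi fun _ : Fin n => m).map T
      = (n.factorial : ENNReal)⁻¹ • ∑ π, Measure.dirac (T (rankVector π)) := by
  have hconst : ∀ π, ∀ z ∈ orderCell π, T z = T (rankVector π) := fun π z hz =>
    hTord _ _ fun i j => by
      rw [le_iff_of_mem_orderCell hz, le_iff_of_mem_orderCell (rankVector_mem_orderCell π)]
  ext B hB
  have hcell : ∀ π, Measure.pi (fun _ => m) (T ⁻¹' B ∩ orderCell π)
      = (n.factorial : ENNReal)⁻¹ * Measure.dirac (T (rankVector π)) B := by
    intro π
    by_cases h : T (rankVector π) ∈ B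
    · rw [Set.inter_eq_right.2 fun z hz => by simpa [hconst π z hz] using h, measure_orderCell,
        Measure.dirac_apply_of_mem h, mul_one]
    · rw [Set.eq_empty_of_forall_notMem fun z (hz : z ∈ T ⁻¹' B ∩ orderCell π) =>
        h (hconst π z hz.2 ▸ hz.1), measure_empty, Measure.dirac_apply' _ hB,
        Set.indicator_of_notMem h, mul_zero]
  rw [Measure.map_apply hT hB, ← measure_inter_conull (measure_compl_iUnion_orderCell m),
    Set.inter_iUnion, measure_iUnion, tsum_fintype]
  · simp [hcell, Finset.mul_sum]
  · exact fun _ _ hne => (pairwise_disjoint_orderCell hne).mono Set.inter_subset_right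
      Set.inter_subset_right
  · exact fun π => (hT hB).inter (measurableSet_orderCell π)

end OrderCell

section RankStatistic

variable {n : ℕ}

noncomputable def rankStatistic (φ : ℝ → ℝ) (nminus nplus : ℕ) (z : Fin n → ℝ) : ℝ :=
  (nplus : ℝ)⁻¹ * ∑ i ∈ univ.filter (fun i : Fin n => nminus ≤ (i : ℕ)),
    φ (((univ.filter fun j : Fin n => z j ≤ z i).card : ℝ) / (n + 1))

lemma measurable_rankStatistic {φ : ℝ → ℝ} (hφ : Measurable φ) (nminus nplus : ℕ) :
    Measurable (rankStatistic (n := n) φ nminus nplus) := by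
  have hrank : ∀ i : Fin n, Measurable fun z : Fin n → ℝ =>
      ((univ.filter fun j => z j ≤ z i).card : ℝ) := fun i => by
    simp only [card_filter, Nat.cast_sum, Nat.cast_ite, Nat.cast_one, Nat.cast_zero]
    exact Finset.measurable_sum _ fun j _ => Measurable.ite
      (measurableSet_le (measurable_pi_apply j) (measurable_pi_apply i)) measurable_const
      measurable_const
  exact (Finset.measurable_sum _ fun i _ => hφ.comp ((hrank i).div_const _)).const_mul _

lemma rankStatistic_congr (φ : ℝ → ℝ) (nminus nplus : ℕ) {z z' : Fin n → ℝ}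
    (h : ∀ i j, z j ≤ z i ↔ z' j ≤ z' i) :
    rankStatistic φ nminus nplus z = rankStatistic φ nminus nplus z' := by
  simp only [rankStatistic, h]

end RankStatistic

open Filter Topology in
lemma measure_Ioi_add_sInf_le (L : Measure ℝ) [IsProbabilityMeasure L] (c : ℝ) {α : ℝ}
    (hα : α ∈ Set.Ioo (0 : ℝ) 1) :
    L (Set.Ioi (c + sInf {t : ℝ | ENNReal.ofReal (1 - α) ≤ L (Set.Iic (c + t))}))
      ≤ ENNReal.ofReal α := by
  set S := {t : ℝ | ENNReal.ofReal (1 - α) ≤ L (Set.Iic (c + t))}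
  have hS : ∀ t, t ∈ S ↔ 1 - α ≤ cdf L (c + t) := fun t => by
    rw [Set.mem_ofPred_eq, ← ofReal_cdf, ENNReal.ofReal_le_ofReal_iff (cdf_nonneg L _)]
  have hne : S.Nonempty := by
    obtain ⟨x, hx⟩ := ((tendsto_cdf_atTop (μ := L)).eventually
      (lt_mem_nhds (show 1 - α < 1 by linarith [hα.1]))).exists
    exact ⟨x - c, (hS _).2 (by simpa using hx.le)⟩
  have hbdd : BddBelow S := by
    obtain ⟨x, hx⟩ := eventually_atBot.1
      ((tendsto_cdf_atBot (μ := L)).eventually (gt_mem_nhds (show 0 < 1 - α by linarith [hα.2])))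
    refine ⟨x - c, fun t ht => ?_⟩
    by_contra! hlt
    exact (hx (c + t) (by linarith)).not_ge ((hS t).1 ht)
  have hright : ∀ y > c + sInf S, 1 - α ≤ cdf L y := fun y hy => by
    obtain ⟨t, htS, hty⟩ := (csInf_lt_iff hbdd hne).1 (show sInf S < y - c by linarith)
    exact ((hS t).1 htS).trans (monotone_cdf L (by linarith))
  have hq : 1 - α ≤ cdf L (c + sInf S) :=
    ge_of_tendsto (((cdf L).right_continuous _).mono Set.Ioi_subset_Ici_self).tendsto
      (eventually_nhdsWithin_of_forall hright)
  rw [← Set.compl_Iic, prob_compl_eq_one_sub measurableSet_Iic, ← ofReal_cdf,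
    ← ENNReal.ofReal_one, ← ENNReal.ofReal_sub _ (cdf_nonneg L _)]
  exact ENNReal.ofReal_le_ofReal (by linarith)

theorem measure_add_quantile_lt_le {Ω : Type*} [MeasurableSpace Ω] {P : Measure Ω}
    [IsProbabilityMeasure P] {n : ℕ} {Z : Ω → Fin n → ℝ} (μ m : Measure ℝ)
    [IsProbabilityMeasure μ] [NullSingletonClass μ] [IsProbabilityMeasure m] [NullSingletonClass m]
    (hZ : P.map Z = Measure.pi fun _ => μ) {T : (Fin n → ℝ) → ℝ} (hT : Measurable T)
    (hTord : ∀ z z' : Fin n → ℝ, (∀ i j, z j ≤ z i ↔ z' j ≤ z' i) → T z = T z')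
    (c : ℝ) {α : ℝ} (hα : α ∈ Set.Ioo (0 : ℝ) 1) :
    P {ω | c + sInf {t : ℝ | ENNReal.ofReal (1 - α)
        ≤ (Measure.pi fun _ : Fin n => m).map T (Set.Iic (c + t))} < T (Z ω)}
      ≤ ENNReal.ofReal α := by
  have : IsProbabilityMeasure ((Measure.pi fun _ : Fin n => m).map T) :=
    Measure.isProbabilityMeasure_map hT.aemeasurable
  have hZ_meas : AEMeasurable Z P :=
    .of_map_ne_zero (by rw [hZ]; exact IsProbabilityMeasure.ne_zero _)
  have hlaw : (Measure.pi fun _ => μ).map T = (Measure.pi fun _ => m).map T := by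
    rw [map_pi_eq_sum_dirac_rankVector μ hT hTord, map_pi_eq_sum_dirac_rankVector m hT hTord]
  refine le_of_eq_of_le ?_ (measure_Ioi_add_sInf_le ((Measure.pi fun _ => m).map T) c hα)
  generalize c + sInf _ = x
  rw [← hlaw, ← hZ, Measure.map_apply hT measurableSet_Ioi,
    Measure.map_apply_of_aemeasurable hZ_meas (hT measurableSet_Ioi)]
  rfl

/-- Proposition 2 of the paper (type-I error bound of the ranking-based independence rank
test): under the null hypothesis, the shuffled rank statistic exceeds
`∫₀¹φ + q(α)` with probability at most `α`, where `q(α)` is the `(1−α)`-quantile of the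
distribution-free null law `L` of the statistic. -/
theorem stmt_8 {𝒳 𝒴 Ω : Type*} [MeasurableSpace 𝒳] [MeasurableSpace 𝒴] [MeasurableSpace Ω]
    (P : Measure Ω) [IsProbabilityMeasure P]
    (nn nminus nplus : ℕ) (hnn : nn = nminus + nplus)
    (hnminus : 1 ≤ nminus) (hnplus : 1 ≤ nplus)
    (X : Fin nn → Ω → 𝒳) (Y : Fin nn → Ω → 𝒴)
    (hX : ∀ i, Measurable (X i)) (hY : ∀ i, Measurable (Y i))
    (hiid_indep : iIndepFun
      (fun i ω => (X i ω, Y i ω)) P)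
    (hiid_ident : ∀ i j : Fin nn, Measure.map (fun ω => (X i ω, Y i ω)) P
      = Measure.map (fun ω => (X j ω, Y j ω)) P)
    (hnull : IndepFun (X ⟨0, by omega⟩) (Y ⟨0, by omega⟩) P)
    (σ' : Ω → Equiv.Perm (Fin nminus))
    (hσ'_meas : Measurable σ')
    (hσ'_indep : IndepFun σ' (fun ω => fun i : Fin nn => (X i ω, Y i ω)) P)
    (s : 𝒳 × 𝒴 → ℝ) (hs_meas : Measurable s)
    (hs_atomless : ∀ c : ℝ,
      P {ω | s (X ⟨0, by omega⟩ ω, Y ⟨1, by omega⟩ ω) = c} = 0)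
    (φ : ℝ → ℝ) (hφ : Measurable φ)
    (score : Ω → Fin nn → ℝ)
    (hscore : ∀ ω i, score ω i = if h : (i : ℕ) < nminus
      then s (X i ω, Y (Fin.castLE (by omega) (σ' ω ⟨(i : ℕ), h⟩)) ω)
      else s (X i ω, Y i ω))
    (What : Ω → ℝ)
    (hWhat : ∀ ω, What ω = (nplus : ℝ)⁻¹
      * ∑ i ∈ univ.filter (fun i : Fin nn => nminus ≤ (i : ℕ)),
          φ (((univ.filter fun j : Fin nn => score ω j ≤ score ω i).card : ℝ) / (nn + 1)))
    (T : (Fin nn → ℝ) → ℝ)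
    (hT : ∀ z, T z = (nplus : ℝ)⁻¹
      * ∑ i ∈ univ.filter (fun i : Fin nn => nminus ≤ (i : ℕ)),
          φ (((univ.filter fun j : Fin nn => z j ≤ z i).card : ℝ) / (nn + 1)))
    (L : Measure ℝ)
    (hL : L = Measure.map T (Measure.pi fun _ : Fin nn => volume.restrict (Set.Ioo 0 1)))
    (α : ℝ) (hα : α ∈ Set.Ioo (0 : ℝ) 1)
    (q : ℝ)
    (hq : q = sInf {t : ℝ |
      ENNReal.ofReal (1 - α) ≤ L (Set.Iic ((∫ u in (0 : ℝ)..1, φ u) + t))}) :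
    P {ω | (∫ u in (0 : ℝ)..1, φ u) + q < What ω} ≤ ENNReal.ofReal α := by
  set i₀ : Fin nn := ⟨0, by omega⟩
  set g : Equiv.Perm (Fin nminus) → Equiv.Perm (Fin nn) :=
    fun π => π.extendDomain (Fin.castLEEmb (by omega)).toEquivRange
  have hscore_eq : score = fun ω i => s (X i ω, Y (g (σ' ω) i) ω) := by
    funext ω i
    rw [hscore, Equiv.Perm.extendDomain_castLEEmb_apply]
    split_ifs <;> rfl
  set μ : Measure ℝ := ((P.map (X i₀)).prod (P.map (Y i₀))).map s with hμ_def
  have hs_meas' : Measurable fun ω => s (X i₀ ω, Y ⟨1, by omega⟩ ω) :=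
    hs_meas.comp ((hX _).prodMk (hY _))
  have hμ : μ = P.map fun ω => s (X i₀ ω, Y ⟨1, by omega⟩ ω) := by
    rw [hμ_def, ← map_prod_eq_prod_of_iIndepFun hX hY hiid_indep hiid_ident hnull,
      Measure.map_map hs_meas ((hX _).prodMk (hY _))]
    rfl
  have : IsProbabilityMeasure μ := hμ ▸ Measure.isProbabilityMeasure_map hs_meas'.aemeasurable
  have : NullSingletonClass μ := ⟨fun c => by
    rw [hμ, Measure.map_apply hs_meas' (measurableSet_singleton c)]
    exact hs_atomless c⟩
  have hscore_law : P.map score = Measure.pi fun _ => μ := hscore_eq ▸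
    map_shuffledScore_eq hX hY hiid_indep hiid_ident hnull hσ'_meas hσ'_indep g hs_meas
  have hT_eq : T = rankStatistic φ nminus nplus := funext hT
  have : IsProbabilityMeasure (volume.restrict (Set.Ioo (0 : ℝ) 1)) := ⟨by simp⟩
  obtain rfl : What = fun ω => T (score ω) := funext fun ω => (hWhat ω).trans (hT _).symm
  subst hL hq
  exact measure_add_quantile_lt_le μ _ hscore_law (hT_eq ▸ measurable_rankStatistic hφ _ _)
    (fun _ _ h => hT_eq ▸ rankStatistic_congr φ nminus nplus h) _ hα
end

section
/- Let 𝒳, 𝒴 be measurable spaces and let (X₁,Y₁),…,(X_n,Y_n) be i.i.d. random pairs valued in 𝒳 × 𝒴 such that X₁ is independent of Y₁; denote by H the law of X₁ and by G the law of Y₁. Let 1 ≤ n₋ ≤ n and let σ be a uniformly distributed random permutation of {1,…,n₋}, independent of the sample. Then the n random pairs (X₁, Y_{σ(1)}), …, (X_{n₋}, Y_{σ(n₋)}), (X_{n₋+1}, Y_{n₋+1}), …, (X_n, Y_n) are mutually independent, each with law H ⊗ G. -/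
/-!
Under the null each pair `(Xᵢ, Yᵢ)` has law `H ⊗ G`, so the sample vector `V` has law
`(H ⊗ G)^⊗n`. Through `(H ⊗ G)^⊗n ≅ H^⊗n ⊗ G^⊗n`, pairing the `X`-coordinates with the
`Y`-coordinates permuted by a fixed `π` is a coordinate permutation of the second factor, so it
preserves `(H ⊗ G)^⊗n`. Since `σ` is independent of `V`, the law of the shuffled vector is a
mixture over `π` of these image laws, hence again `(H ⊗ G)^⊗n`; mutual independence and the
marginals are read off this product law.
-/

open MeasureTheory ProbabilityTheory

theorem ProbabilityTheory.IndepFun.map_uncurry_eq_of_forall_map_eq {Ω ι β γ : Type*}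
    [MeasurableSpace Ω] [MeasurableSpace ι] [MeasurableSpace β] [MeasurableSpace γ]
    {P : Measure Ω} [IsProbabilityMeasure P] {σ : Ω → ι} {V : Ω → β} {φ : ι → β → γ}
    {ν : Measure γ} (hσ : Measurable σ) (hV : Measurable V)
    (hφ : Measurable (Function.uncurry φ)) (hindep : IndepFun σ V P)
    (hpres : ∀ i, (P.map V).map (φ i) = ν) :
    P.map (fun ω => φ (σ ω) (V ω)) = ν := by
  have hlaw : P.map (fun ω => (σ ω, V ω)) = (P.map σ).prod (P.map V) :=
    (indepFun_iff_map_prod_eq_prod_map_map hσ.aemeasurable hV.aemeasurable).1 hindep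
  have hφi (i : ι) : Measurable (φ i) := hφ.comp measurable_prodMk_left
  have : IsProbabilityMeasure (P.map σ) := Measure.isProbabilityMeasure_map hσ.aemeasurable
  calc P.map (fun ω => φ (σ ω) (V ω))
      = ((P.map σ).prod (P.map V)).map (Function.uncurry φ) := by
        rw [← hlaw, Measure.map_map hφ (hσ.prodMk hV)]
        rfl
    _ = ν := by
        ext s hs
        have hfiber (i : ι) : (P.map V) (φ i ⁻¹' s) = ν s := by
          rw [← Measure.map_apply (hφi i) hs, hpres]
        rw [Measure.map_apply hφ hs, Measure.prod_apply (hφ hs)]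
        change ∫⁻ i, (P.map V) (φ i ⁻¹' s) ∂(P.map σ) = ν s
        simp only [hfiber, lintegral_const, measure_univ, mul_one]

theorem measurePreserving_comp_perm {ι β : Type*} [Fintype ι] [MeasurableSpace β]
    (μ : Measure β) [SigmaFinite μ] (e : Equiv.Perm ι) :
    MeasurePreserving (fun y : ι → β => y ∘ e)
      (Measure.pi fun _ => μ) (Measure.pi fun _ => μ) := by
  convert measurePreserving_piCongrLeft (fun _ => μ) e.symm using 1
  ext y i
  simp [MeasurableEquiv.coe_piCongrLeft, Equiv.piCongrLeft_apply_eq_cast]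

theorem measurePreserving_pi_prod_permute_snd {ι α β : Type*} [Fintype ι] [MeasurableSpace α]
    [MeasurableSpace β] (μ : Measure α) (ν : Measure β) [SigmaFinite μ] [SigmaFinite ν]
    (e : Equiv.Perm ι) :
    MeasurePreserving (fun v : ι → α × β => fun i => ((v i).1, (v (e i)).2))
      (Measure.pi fun _ => μ.prod ν) (Measure.pi fun _ => μ.prod ν) := by
  have hA := measurePreserving_arrowProdEquivProdArrow α β ι (fun _ => μ) (fun _ => ν)
  exact hA.symm.comp (((MeasurePreserving.id _).prod (measurePreserving_comp_perm ν e)).comp hA)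

theorem iIndepFun_and_map_eq_of_map_fun_eq_pi {Ω ι β : Type*} [MeasurableSpace Ω] [Fintype ι]
    [MeasurableSpace β] {P : Measure Ω} [IsProbabilityMeasure P] {f : ι → Ω → β}
    {μ : Measure β} [IsProbabilityMeasure μ] (hf : Measurable fun ω i => f i ω)
    (hlaw : P.map (fun ω i => f i ω) = Measure.pi fun _ => μ) :
    iIndepFun f P ∧ ∀ i, P.map (f i) = μ := by
  have hfi (i : ι) : Measurable (f i) := measurable_pi_iff.1 hf i
  have hmarg (i : ι) : P.map (f i) = μ := by
    rw [← (measurePreserving_eval (fun _ => μ) i).map_eq, ← hlaw,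
      Measure.map_map (measurable_pi_apply i) hf]
    rfl
  refine ⟨(iIndepFun_iff_map_fun_eq_pi_map fun i => (hfi i).aemeasurable).2 ?_, hmarg⟩
  simp only [hmarg, hlaw]

/-- Proposition 1 of the paper (splitting-and-shuffling under the null): if the pairs
`(Xᵢ, Yᵢ)` are i.i.d. with `X₁ ⊥ Y₁`, and `σ` is a uniform random permutation of
`{1,…,n₋}` independent of the sample, then the `n` pairs `(Xᵢ, Y_{σ(i)})`, `i ≤ n₋`, and
`(Xᵢ, Yᵢ)`, `i > n₋`, are mutually independent, each with law `H ⊗ G`. -/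
theorem stmt_9 {𝒳 𝒴 Ω : Type*} [MeasurableSpace 𝒳] [MeasurableSpace 𝒴] [MeasurableSpace Ω]
    (P : Measure Ω) [IsProbabilityMeasure P]
    (n nminus : ℕ) (hnminus : 1 ≤ nminus) (hle : nminus ≤ n)
    (X : Fin n → Ω → 𝒳) (Y : Fin n → Ω → 𝒴)
    (hX : ∀ i, Measurable (X i)) (hY : ∀ i, Measurable (Y i))
    (hiid_indep : iIndepFun
      (fun i ω => (X i ω, Y i ω)) P)
    (hiid_ident : ∀ i j : Fin n, Measure.map (fun ω => (X i ω, Y i ω)) P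
      = Measure.map (fun ω => (X j ω, Y j ω)) P)
    (hnull : IndepFun (X ⟨0, by omega⟩) (Y ⟨0, by omega⟩) P)
    (H : Measure 𝒳) (hH : H = Measure.map (X ⟨0, by omega⟩) P)
    (G : Measure 𝒴) (hG : G = Measure.map (Y ⟨0, by omega⟩) P)
    (σ : Ω → Equiv.Perm (Fin nminus))
    (hσ_meas : Measurable σ)
    (hσ_indep : IndepFun σ (fun ω => fun i : Fin n => (X i ω, Y i ω)) P)
    (Z : Fin n → Ω → 𝒳 × 𝒴)
    (hZ : ∀ i ω, Z i ω = if h : (i : ℕ) < nminus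
      then (X i ω, Y (Fin.castLE hle (σ ω ⟨(i : ℕ), h⟩)) ω)
      else (X i ω, Y i ω)) :
    iIndepFun Z P
      ∧ ∀ i, Measure.map (Z i) P = H.prod G := by
  set V : Ω → Fin n → 𝒳 × 𝒴 := fun ω i => (X i ω, Y i ω)
  have hV : Measurable V := measurable_pi_lambda _ fun i => (hX i).prodMk (hY i)
  have : IsProbabilityMeasure H := hH ▸ Measure.isProbabilityMeasure_map (hX _).aemeasurable
  have : IsProbabilityMeasure G := hG ▸ Measure.isProbabilityMeasure_map (hY _).aemeasurable
  have hpair (i : Fin n) : P.map (fun ω => (X i ω, Y i ω)) = H.prod G := by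
    rw [hiid_ident i _, hH, hG]
    exact (indepFun_iff_map_prod_eq_prod_map_map (hX _).aemeasurable (hY _).aemeasurable).1 hnull
  have hVlaw : P.map V = Measure.pi fun _ => H.prod G := by
    rw [hiid_indep.map_fun_eq_pi_map fun i => ((hX i).prodMk (hY i)).aemeasurable]
    simp only [hpair]
  let e (π : Equiv.Perm (Fin nminus)) : Equiv.Perm (Fin n) := π.extendDomain (Fin.castLEquiv hle)
  let φ (π : Equiv.Perm (Fin nminus)) (v : Fin n → 𝒳 × 𝒴) : Fin n → 𝒳 × 𝒴 :=
    fun i => ((v i).1, (v (e π i)).2)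
  have hZφ : (fun ω i => Z i ω) = fun ω => φ (σ ω) (V ω) := by
    ext ω i : 2
    rw [hZ]
    split_ifs with h
    · simp only [φ, V, e, Equiv.Perm.extendDomain_apply_subtype _ (Fin.castLEquiv hle) h]
      rfl
    · simp only [φ, V, e, Equiv.Perm.extendDomain_apply_not_subtype _ (Fin.castLEquiv hle) h]
  have hφ : Measurable (Function.uncurry φ) :=
    measurable_from_prod_countable_right fun π =>
      (measurePreserving_pi_prod_permute_snd H G (e π)).measurable
  refine iIndepFun_and_map_eq_of_map_fun_eq_pi (hZφ ▸ hφ.comp (hσ_meas.prodMk hV)) ?_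
  rw [hZφ]
  exact hσ_indep.map_uncurry_eq_of_forall_map_eq hσ_meas hV hφ
    fun π => hVlaw ▸ (measurePreserving_pi_prod_permute_snd H G (e π)).map_eq
end

section
/- Let p ∈ (0,1), n ≥ 1/p, n₊ = ⌊pn⌋ and n₋ = n − n₊. Let x₁,…,x_{n₊} and y₁,…,y_{n₋} be real numbers with empirical CDFs F̂_{n₊}(t) := (1/n₊)#{i : x_i ≤ t} and F̂_{n₋}(t) := (1/n₋)#{j : y_j ≤ t}, and let F̂_n := (n₊/n) F̂_{n₊} + (n₋/n) F̂_{n₋} be the pooled empirical CDF. Let F₊, F₋ : ℝ → [0,1] be any functions and F := p F₊ + (1−p) F₋. Let I ⊆ {1,…,n} index the positive observations in the pooled sample, |I| = n₊, with pooled values z₁,…,z_n, and let φ : [0,1] → ℝ be twice continuously differentiable. Then (1/n₊) | Σ_{i∈I} [ φ( n F̂_n(z_i)/(n+1) ) − φ( F(z_i) ) − φ′( F(z_i) ) ( n F̂_n(z_i)/(n+1) − F(z_i) ) ] | ≤ 3 p² ‖φ″‖_∞ sup_t ( F̂_{n₊}(t) − F₊(t) )² + 3 (1−p)² ‖φ″‖_∞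 sup_t ( F̂_{n₋}(t) − F₋(t) )² + 13 ‖φ″‖_∞ / n². -/
/-!
Each summand is a first-order Taylor remainder of `φ` at `F(zᵢ) ∈ [0,1]`, so it is at most
`‖φ''‖_∞` times the squared distance from `n F̂ₙ(zᵢ)/(n+1)` to `F(zᵢ)`. With `q = n₊/n`,
the rounding gives `p - 1/n ≤ q ≤ p`, so this distance is `p (F̂₊ - F₊) + (1-p) (F̂₋ - F₋)`
up to an error of at most `2/n` (from replacing `q` by `p` and from the factor `n/(n+1)`),
and `(u + v + w)² ≤ 3u² + 3v² + 3w²` finishes the estimate, with `12 ≤ 13`.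
-/

open Finset

section Taylor

variable {s : Set ℝ} {f f' f'' : ℝ → ℝ} {C a b : ℝ}

/-- Second-order Taylor bound from two applications of the mean value inequality (the sharp
constant would be `C / 2`). -/
theorem Convex.abs_sub_sub_mul_le_of_hasDerivWithinAt (hs : Convex ℝ s)
    (hf : ∀ x ∈ s, HasDerivWithinAt f (f' x) s x)
    (hf' : ∀ x ∈ s, HasDerivWithinAt f' (f'' x) s x)
    (hC : ∀ x ∈ s, |f'' x| ≤ C) (ha : a ∈ s) (hb : b ∈ s) :
    |f a - f b - f' b * (a - b)| ≤ C * (a - b) ^ 2 := by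
  have hC0 : 0 ≤ C := (abs_nonneg _).trans (hC b hb)
  have hseg : Set.uIcc b a ⊆ s := hs.ordConnected.uIcc_subset hb ha
  have hf'_sub : ∀ x ∈ Set.uIcc b a, ‖f' x - f' b‖ ≤ C * |a - b| := fun x hx =>
    calc ‖f' x - f' b‖ ≤ C * ‖x - b‖ :=
          hs.norm_image_sub_le_of_norm_hasDerivWithin_le hf' hC hb (hseg hx)
      _ ≤ C * |a - b| := by gcongr; exact Set.abs_sub_left_of_mem_uIcc hx
  have hg : ∀ x ∈ Set.uIcc b a,
      HasDerivWithinAt (fun y => f y - f' b * y) (f' x - f' b) (Set.uIcc b a) x := fun x hx =>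
    ((hf x (hseg hx)).mono hseg).sub (by simpa using (hasDerivWithinAt_id x _).const_mul (f' b))
  have := (convex_uIcc b a).norm_image_sub_le_of_norm_hasDerivWithin_le hg hf'_sub
    Set.left_mem_uIcc Set.right_mem_uIcc
  rw [Real.norm_eq_abs, Real.norm_eq_abs, mul_assoc, abs_mul_abs_self, ← sq] at this
  convert this using 2
  ring

theorem abs_sub_sub_derivWithin_mul_le_iSup (hconv : Convex ℝ s) (hcomp : IsCompact s)
    (hs : UniqueDiffOn ℝ s) (hf : ContDiffOn ℝ 2 f s) (ha : a ∈ s) (hb : b ∈ s) :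
    |f a - f b - derivWithin f s b * (a - b)|
      ≤ (⨆ u : s, |derivWithin (derivWithin f s) s u|) * (a - b) ^ 2 := by
  have hf1 : ContDiffOn ℝ 1 (derivWithin f s) s := hf.derivWithin hs (by norm_num)
  have hbdd : BddAbove (Set.range fun u : s => |derivWithin (derivWithin f s) s u|) := by
    simpa only [Set.image_eq_range] using
      hcomp.bddAbove_image (hf1.continuousOn_derivWithin hs le_rfl).abs
  refine hconv.abs_sub_sub_mul_le_of_hasDerivWithinAt
    (fun x hx => ((hf.differentiableOn (by norm_num)) x hx).hasDerivWithinAt)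
    (fun x hx => ((hf1.differentiableOn one_ne_zero) x hx).hasDerivWithinAt)
    (fun x hx => le_ciSup hbdd ⟨x, hx⟩) ha hb

end Taylor

theorem card_filter_div_mem_Icc {m : ℕ} (P : Fin m → Prop) [DecidablePred P] :
    ((univ.filter P).card : ℝ) / m ∈ Set.Icc (0 : ℝ) 1 :=
  ⟨by positivity, div_le_one_of_le₀ (by simpa using card_filter_le univ P) m.cast_nonneg⟩

theorem convex_comb_mem_unitInterval {q u v : ℝ} (hq : q ∈ Set.Icc (0 : ℝ) 1)
    (hu : u ∈ Set.Icc (0 : ℝ) 1) (hv : v ∈ Set.Icc (0 : ℝ) 1) :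
    q * u + (1 - q) * v ∈ Set.Icc (0 : ℝ) 1 :=
  convex_Icc (0 : ℝ) 1 hu hv hq.1 (sub_nonneg.2 hq.2) (add_sub_cancel _ _)

theorem bddAbove_range_sub_sq {G F : ℝ → ℝ} (hG : ∀ t, G t ∈ Set.Icc (0 : ℝ) 1)
    (hF : ∀ t, F t ∈ Set.Icc (0 : ℝ) 1) : BddAbove (Set.range fun t => (G t - F t) ^ 2) := by
  refine ⟨1, ?_⟩
  rintro _ ⟨t, rfl⟩
  obtain ⟨⟨hG0, hG1⟩, ⟨hF0, hF1⟩⟩ := And.intro (hG t) (hF t)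
  exact (sq_le_one_iff_abs_le_one _).2 (abs_le.2 ⟨by linarith, by linarith⟩)

theorem floor_mul_div_mem_Icc {p : ℝ} (hp : 0 ≤ p) {n : ℕ} (hn : 0 < n) :
    (⌊p * n⌋₊ / n : ℝ) ∈ Set.Icc (p - 1 / n) p := by
  have hn' : (0 : ℝ) < n := by exact_mod_cast hn
  constructor
  · rw [sub_le_iff_le_add, ← add_div, le_div_iff₀ hn']
    exact (Nat.lt_floor_add_one _).le
  · rw [div_le_iff₀ hn']
    exact Nat.floor_le (by positivity)

theorem sq_add_add_le (u v w : ℝ) : (u + v + w) ^ 2 ≤ 3 * u ^ 2 + 3 * v ^ 2 + 3 * w ^ 2 := by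
  nlinarith [sq_nonneg (u - v), sq_nonneg (u - w), sq_nonneg (v - w)]

/-- Rescaling the pooled empirical CDF by `n / (n + 1)` and replacing its weight `q = n₊ / n` by
`p` moves it by at most `2 / n`. -/
theorem abs_rescaled_pooled_sub_mixture_le {n p q u v : ℝ} (hn : 0 < n)
    (hq : q ∈ Set.Icc (0 : ℝ) 1) (hpq : q ∈ Set.Icc (p - 1 / n) p) (hu : u ∈ Set.Icc (0 : ℝ) 1)
    (hv : v ∈ Set.Icc (0 : ℝ) 1) :
    |n * (q * u + (1 - q) * v) / (n + 1) - (p * u + (1 - p) * v)| ≤ 2 / n := by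
  set w := q * u + (1 - q) * v
  obtain ⟨hw0, hw1⟩ : w ∈ Set.Icc (0 : ℝ) 1 := convex_comb_mem_unitInterval hq hu hv
  have hweight : |(q - p) * (u - v)| ≤ 1 / n := by
    rw [abs_mul]
    refine (mul_le_mul ?_ ?_ (abs_nonneg _) (by positivity)).trans_eq (mul_one (1 / n))
    · exact abs_sub_le_iff.2 ⟨by linarith [hpq.2, one_div_pos.2 hn], by linarith [hpq.1]⟩
    · exact abs_sub_le_iff.2 ⟨by linarith [hu.2, hv.1], by linarith [hu.1, hv.2]⟩
  have hrescale : w / (n + 1) ∈ Set.Icc 0 (1 / n) :=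
    ⟨by positivity, div_le_div₀ zero_le_one hw1 hn (by linarith)⟩
  have hsplit : n * w / (n + 1) - (p * u + (1 - p) * v) = (q - p) * (u - v) - w / (n + 1) := by
    field_simp
    ring
  rw [hsplit]
  calc |(q - p) * (u - v) - w / (n + 1)| ≤ |(q - p) * (u - v)| + |w / (n + 1)| := abs_sub _ _
    _ ≤ 1 / n + 1 / n :=
        add_le_add hweight (abs_le.2 ⟨by linarith [hrescale.1, one_div_pos.2 hn], hrescale.2⟩)
    _ = 2 / n := by ring

theorem sq_rescaled_pooled_sub_mixture_le {n p q u v : ℝ} (hn : 0 < n)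
    (hq : q ∈ Set.Icc (0 : ℝ) 1) (hpq : q ∈ Set.Icc (p - 1 / n) p) (hu : u ∈ Set.Icc (0 : ℝ) 1)
    (hv : v ∈ Set.Icc (0 : ℝ) 1) (Fu Fv : ℝ) :
    (n * (q * u + (1 - q) * v) / (n + 1) - (p * Fu + (1 - p) * Fv)) ^ 2
      ≤ 3 * p ^ 2 * (u - Fu) ^ 2 + 3 * (1 - p) ^ 2 * (v - Fv) ^ 2 + 12 / n ^ 2 := by
  set r := n * (q * u + (1 - q) * v) / (n + 1) - (p * u + (1 - p) * v)
  have hr : r ^ 2 ≤ (2 / n) ^ 2 := by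
    rw [← sq_abs]
    exact pow_le_pow_left₀ (abs_nonneg r) (abs_rescaled_pooled_sub_mixture_le hn hq hpq hu hv) 2
  calc _ = (p * (u - Fu) + (1 - p) * (v - Fv) + r) ^ 2 := by ring
    _ ≤ 3 * (p * (u - Fu)) ^ 2 + 3 * ((1 - p) * (v - Fv)) ^ 2 + 3 * r ^ 2 := sq_add_add_le _ _ _
    _ ≤ 3 * (p * (u - Fu)) ^ 2 + 3 * ((1 - p) * (v - Fv)) ^ 2 + 3 * (2 / n) ^ 2 := by gcongr
    _ = _ := by ring

theorem abs_taylor_remainder_rescaled_pooled_le {φ : ℝ → ℝ}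
    (hφ : ContDiffOn ℝ 2 φ (Set.Icc 0 1)) {n p q u v Fu Fv : ℝ} (hn : 0 < n)
    (hp : p ∈ Set.Icc (0 : ℝ) 1) (hq : q ∈ Set.Icc (0 : ℝ) 1)
    (hpq : q ∈ Set.Icc (p - 1 / n) p) (hu : u ∈ Set.Icc (0 : ℝ) 1) (hv : v ∈ Set.Icc (0 : ℝ) 1)
    (hFu : Fu ∈ Set.Icc (0 : ℝ) 1) (hFv : Fv ∈ Set.Icc (0 : ℝ) 1) :
    |φ (n * (q * u + (1 - q) * v) / (n + 1)) - φ (p * Fu + (1 - p) * Fv)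
        - derivWithin φ (Set.Icc 0 1) (p * Fu + (1 - p) * Fv)
          * (n * (q * u + (1 - q) * v) / (n + 1) - (p * Fu + (1 - p) * Fv))|
      ≤ (⨆ x : Set.Icc (0 : ℝ) 1, |derivWithin (derivWithin φ (Set.Icc 0 1)) (Set.Icc 0 1) x|)
        * (3 * p ^ 2 * (u - Fu) ^ 2 + 3 * (1 - p) ^ 2 * (v - Fv) ^ 2 + 12 / n ^ 2) := by
  have hpooled : n * (q * u + (1 - q) * v) / (n + 1) ∈ Set.Icc (0 : ℝ) 1 := by
    obtain ⟨h0, h1⟩ := convex_comb_mem_unitInterval hq hu hv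
    exact ⟨by positivity, (div_le_one (by positivity)).2 (by nlinarith)⟩
  refine (abs_sub_sub_derivWithin_mul_le_iSup (convex_Icc 0 1) isCompact_Icc
    (uniqueDiffOn_Icc zero_lt_one) hφ hpooled (convex_comb_mem_unitInterval hp hFu hFv)).trans ?_
  gcongr
  · exact Real.iSup_nonneg fun _ => abs_nonneg _
  · exact sq_rescaled_pooled_sub_mixture_le hn hq hpq hu hv Fu Fv

theorem one_div_card_mul_abs_sum_le {ι : Type*} {s : Finset ι} (hs : s.Nonempty) {g : ι → ℝ}
    {E : ℝ} (hg : ∀ i ∈ s, |g i| ≤ E) : (1 / s.card : ℝ) * |∑ i ∈ s, g i| ≤ E := by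
  have hcard : (0 : ℝ) < s.card := by exact_mod_cast hs.card_pos
  rw [one_div_mul_eq_div, div_le_iff₀ hcard, mul_comm]
  calc |∑ i ∈ s, g i| ≤ ∑ i ∈ s, |g i| := abs_sum_le_sum_abs g s
    _ ≤ s.card • E := sum_le_card_nsmul s _ E hg
    _ = s.card * E := nsmul_eq_mul _ _

theorem stmt_14_general (p : ℝ) (hp : p ∈ Set.Ioo (0 : ℝ) 1) (n : ℕ) (hn : 1 / p ≤ (n : ℝ))
    (nplus nminus : ℕ) (hnplus : nplus = ⌊p * n⌋₊) (hnminus : nminus = n - nplus)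
    (x : Fin nplus → ℝ) (y : Fin nminus → ℝ)
    (Fhatplus Fhatminus Fhatn : ℝ → ℝ)
    (hFhatplus : ∀ t, Fhatplus t
      = ((univ.filter fun i : Fin nplus => x i ≤ t).card : ℝ) / nplus)
    (hFhatminus : ∀ t, Fhatminus t
      = ((univ.filter fun j : Fin nminus => y j ≤ t).card : ℝ) / nminus)
    (hFhatn : ∀ t, Fhatn t = (nplus / n : ℝ) * Fhatplus t + (nminus / n : ℝ) * Fhatminus t)
    (Fplus Fminus : ℝ → ℝ)
    (hFplus : ∀ t, Fplus t ∈ Set.Icc (0 : ℝ) 1)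
    (hFminus : ∀ t, Fminus t ∈ Set.Icc (0 : ℝ) 1)
    (F : ℝ → ℝ) (hF : ∀ t, F t = p * Fplus t + (1 - p) * Fminus t)
    (z : Fin n → ℝ) (I : Finset (Fin n)) (hIcard : I.card = nplus)
    (φ : ℝ → ℝ) (hφ : ContDiffOn ℝ 2 φ (Set.Icc 0 1))
    (φ' φ'' : ℝ → ℝ)
    (hφ' : φ' = derivWithin φ (Set.Icc 0 1))
    (hφ'' : φ'' = derivWithin φ' (Set.Icc 0 1)) :
    (1 / nplus : ℝ) * |∑ i ∈ I, (φ (n * Fhatn (z i) / (n + 1)) - φ (F (z i))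
        - φ' (F (z i)) * (n * Fhatn (z i) / (n + 1) - F (z i)))|
      ≤ 3 * p ^ 2 * (⨆ u : Set.Icc (0 : ℝ) 1, |φ'' u|)
          * (⨆ t : ℝ, (Fhatplus t - Fplus t) ^ 2)
        + 3 * (1 - p) ^ 2 * (⨆ u : Set.Icc (0 : ℝ) 1, |φ'' u|)
          * (⨆ t : ℝ, (Fhatminus t - Fminus t) ^ 2)
        + 13 * (⨆ u : Set.Icc (0 : ℝ) 1, |φ'' u|) / n ^ 2 := by
  obtain ⟨hp0, hp1⟩ := hp
  have hn0 : (0 : ℝ) < n := (one_div_pos.2 hp0).trans_le hn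
  have hpq : (nplus / n : ℝ) ∈ Set.Icc (p - 1 / n) p :=
    hnplus ▸ floor_mul_div_mem_Icc hp0.le (by exact_mod_cast hn0)
  have hq : (nplus / n : ℝ) ∈ Set.Icc 0 1 := ⟨by positivity, hpq.2.trans hp1.le⟩
  have hweights : (nminus / n : ℝ) = 1 - nplus / n := by
    have : nplus ≤ n := by exact_mod_cast (div_le_one hn0).1 hq.2
    rw [hnminus, Nat.cast_sub this, sub_div, div_self hn0.ne']
  have hI : I.Nonempty := by
    rw [← card_pos, hIcard, hnplus, Nat.floor_pos, ← div_le_iff₀' hp0]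
    exact hn
  have hGp (t : ℝ) := hFhatplus t ▸ card_filter_div_mem_Icc _
  have hGm (t : ℝ) := hFhatminus t ▸ card_filter_div_mem_Icc _
  subst hφ' hφ''
  set C := ⨆ u : Set.Icc (0 : ℝ) 1, |derivWithin (derivWithin φ (Set.Icc 0 1)) (Set.Icc 0 1) u|
  rw [← hIcard]
  refine one_div_card_mul_abs_sum_le hI fun i _ => ?_
  set t := z i
  calc _ ≤ C * (3 * p ^ 2 * (Fhatplus t - Fplus t) ^ 2
          + 3 * (1 - p) ^ 2 * (Fhatminus t - Fminus t) ^ 2 + 12 / n ^ 2) := by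
        rw [hFhatn, hweights, hF]
        exact abs_taylor_remainder_rescaled_pooled_le hφ hn0 ⟨hp0.le, hp1.le⟩ hq hpq (hGp t)
          (hGm t) (hFplus t) (hFminus t)
    _ = 3 * p ^ 2 * C * (Fhatplus t - Fplus t) ^ 2
          + 3 * (1 - p) ^ 2 * C * (Fhatminus t - Fminus t) ^ 2 + 12 * C / n ^ 2 := by ring
    _ ≤ _ := by
        have hC0 : 0 ≤ C := Real.iSup_nonneg fun _ => abs_nonneg _
        gcongr
        · exact le_ciSup (bddAbove_range_sub_sq hGp hFplus) t
        · exact le_ciSup (bddAbove_range_sub_sq hGm hFminus) t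
        · norm_num

/-- Deterministic bound on the Taylor–Lagrange remainder of the linearization of the two-sample
rank statistic, splitting the pooled empirical CDF deviation into the deviations of the two
subsample empirical CDFs (proof of Proposition 3 of the supplementary material). -/
theorem stmt_14 (p : ℝ) (hp : p ∈ Set.Ioo (0 : ℝ) 1) (n : ℕ) (hn : 1 / p ≤ (n : ℝ))
    (nplus nminus : ℕ) (hnplus : nplus = ⌊p * n⌋₊) (hnminus : nminus = n - nplus)
    (x : Fin nplus → ℝ) (y : Fin nminus → ℝ)
    (Fhatplus Fhatminus Fhatn : ℝ → ℝ)
    (hFhatplus : ∀ t, Fhatplus t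
      = ((univ.filter fun i : Fin nplus => x i ≤ t).card : ℝ) / nplus)
    (hFhatminus : ∀ t, Fhatminus t
      = ((univ.filter fun j : Fin nminus => y j ≤ t).card : ℝ) / nminus)
    (hFhatn : ∀ t, Fhatn t = (nplus / n : ℝ) * Fhatplus t + (nminus / n : ℝ) * Fhatminus t)
    (Fplus Fminus : ℝ → ℝ)
    (hFplus : ∀ t, Fplus t ∈ Set.Icc (0 : ℝ) 1)
    (hFminus : ∀ t, Fminus t ∈ Set.Icc (0 : ℝ) 1)
    (F : ℝ → ℝ) (hF : ∀ t, F t = p * Fplus t + (1 - p) * Fminus t)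
    (z : Fin n → ℝ) (I : Finset (Fin n)) (hIcard : I.card = nplus)
    (e : Fin nplus ↪ Fin n) (f : Fin nminus ↪ Fin n)
    (hef : ∀ i j, e i ≠ f j)
    (hI : I = univ.map e)
    (hzx : ∀ i, z (e i) = x i) (hzy : ∀ j, z (f j) = y j)
    (φ : ℝ → ℝ) (hφ : ContDiffOn ℝ 2 φ (Set.Icc 0 1))
    (φ' φ'' : ℝ → ℝ)
    (hφ' : φ' = derivWithin φ (Set.Icc 0 1))
    (hφ'' : φ'' = derivWithin φ' (Set.Icc 0 1)) :
    (1 / nplus : ℝ) * |∑ i ∈ I, (φ (n * Fhatn (z i) / (n + 1)) - φ (F (z i))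
        - φ' (F (z i)) * (n * Fhatn (z i) / (n + 1) - F (z i)))|
      ≤ 3 * p ^ 2 * (⨆ u : Set.Icc (0 : ℝ) 1, |φ'' u|)
          * (⨆ t : ℝ, (Fhatplus t - Fplus t) ^ 2)
        + 3 * (1 - p) ^ 2 * (⨆ u : Set.Icc (0 : ℝ) 1, |φ'' u|)
          * (⨆ t : ℝ, (Fhatminus t - Fminus t) ^ 2)
        + 13 * (⨆ u : Set.Icc (0 : ℝ) 1, |φ'' u|) / n ^ 2 :=
  stmt_14_general p hp n hn nplus nminus hnplus hnminus x y Fhatplus Fhatminus Fhatn hFhatplus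
    hFhatminus hFhatn Fplus Fminus hFplus hFminus F hF z I hIcard φ hφ φ' φ'' hφ' hφ''
end
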